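/- arXiv:2102.12879 — 5 statements merged into one kernel-verified Lean document; each statement's English description precedes it below -/
import Mathlib

section
/- Let E be a finite ground set, f : 2^E → ℝ_{≥0} a non-negative monotone submodular set function, and w : E → ℝ_{>0} a weight function. Let A ⊆ E, a ∈ E, and let Y ⊆ E be nonempty. If for every y ∈ Y ∖ A it holds that f_A({y})/w(y) ≤ f_A({a})/w(a), then f_A({a})/w(a) ≥ (f(Y) − f(A))/w(Y). -/
open Finset

variable {α : Type*}

/-- A set function `f` is submodular on ground set `E`. -/
def SubmodularOn [DecidableEq α] (E : Finset α) (f : Finset α → ℝ) : Prop :=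
  ∀ A B : Finset α, A ⊆ B → B ⊆ E → ∀ e ∈ E, e ∉ B →
    f (insert e B) - f B ≤ f (insert e A) - f A

/-- A set function `f` is monotone on ground set `E`. -/
def MonotoneOnSets (E : Finset α) (f : Finset α → ℝ) : Prop :=
  ∀ S T : Finset α, S ⊆ T → T ⊆ E → f S ≤ f T

/-- A set function `f` is non-negative on ground set `E`. -/
def NonnegOn (E : Finset α) (f : Finset α → ℝ) : Prop :=
  ∀ S : Finset α, S ⊆ E → 0 ≤ f S

/-- Total weight of a set. -/
def wt (w : α → ℝ) (S : Finset α) : ℝ := ∑ e ∈ S, w e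

/-- Marginal value `f_A(S) = f(A ∪ S) - f(A)`. -/
def marginal [DecidableEq α] (f : Finset α → ℝ) (A S : Finset α) : ℝ := f (A ∪ S) - f A

/-- A greedy execution on the MSK instance `(E, f, w, W)`: an ordering `e_1, …, e_n`
of the elements of `E` (here `order`, 0-indexed) together with sets
`sol 0 = ∅ ⊆ sol 1 ⊆ … ⊆ sol n` such that at every step the considered element maximizes
the marginal density among the remaining elements, and it is added iff it fits. -/
structure GreedyExec [DecidableEq α] (E : Finset α) (f : Finset α → ℝ) (w : α → ℝ)
    (W : ℝ) where
  order : List α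
  nodup : order.Nodup
  ground : order.toFinset = E
  sol : ℕ → Finset α
  sol_zero : sol 0 = ∅
  greedy_max : ∀ (i : ℕ) (hi : i < order.length), ∀ e ∈ order.drop i,
    marginal f (sol i) {e} / w e ≤
      marginal f (sol i) {order.get ⟨i, hi⟩} / w (order.get ⟨i, hi⟩)
  step_add : ∀ (i : ℕ) (hi : i < order.length),
    wt w (sol i) + w (order.get ⟨i, hi⟩) ≤ W →
      sol (i + 1) = insert (order.get ⟨i, hi⟩) (sol i)
  step_skip : ∀ (i : ℕ) (hi : i < order.length),
    W < wt w (sol i) + w (order.get ⟨i, hi⟩) → sol (i + 1) = sol i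

/-- The output of a greedy execution. -/
def GreedyExec.out [DecidableEq α] {E : Finset α} {f : Finset α → ℝ} {w : α → ℝ} {W : ℝ}
    (g : GreedyExec E f w W) : Finset α := g.sol g.order.length

lemma submodular_subadd [DecidableEq α] (E : Finset α) (f : Finset α → ℝ)
    (hsub : SubmodularOn E f) (A : Finset α) (hA : A ⊆ E) :
    ∀ S : Finset α, S ⊆ E →
      f (A ∪ S) - f A ≤ ∑ e ∈ S \ A, (f (insert e A) - f A) := by
  intro S
  induction S using Finset.induction with
  | empty => simp
  | @insert x S hx ih =>
    intro hSE
    have hSE' : S ⊆ E := (Finset.subset_insert x S).trans hSE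
    have hxE : x ∈ E := hSE (Finset.mem_insert_self x S)
    by_cases hxA : x ∈ A
    · have h1 : A ∪ insert x S = A ∪ S := by
        ext z
        simp only [Finset.mem_union, Finset.mem_insert]
        constructor
        · rintro (h | rfl | h)
          exacts [Or.inl h, Or.inl hxA, Or.inr h]
        · tauto
      have h2 : insert x S \ A = S \ A := by
        rw [Finset.insert_sdiff_of_mem _ hxA]
      rw [h1, h2]; exact ih hSE'
    · have h2 : insert x S \ A = insert x (S \ A) := Finset.insert_sdiff_of_notMem _ hxA
      rw [h2, Finset.sum_insert (by simp [hx])]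
      have hxAS : x ∉ A ∪ S := by simp [hxA, hx]
      have hsm := hsub A (A ∪ S) Finset.subset_union_left
        (Finset.union_subset hA hSE') x hxE hxAS
      have h1 : A ∪ insert x S = insert x (A ∪ S) := by
        rw [Finset.union_insert]
      rw [h1]
      have := ih hSE'
      linarith

/-- Lemma 2.2: if every `y ∈ Y \ A` satisfies
`f_A({y})/w(y) ≤ f_A({a})/w(a)`, then `f_A({a})/w(a) ≥ (f(Y) - f(A))/w(Y)`. -/
theorem greedy_density_bound [DecidableEq α] (E : Finset α) (f : Finset α → ℝ)
    (w : α → ℝ)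
    (hf0 : NonnegOn E f) (hmono : MonotoneOnSets E f) (hsub : SubmodularOn E f)
    (hw : ∀ e ∈ E, 0 < w e)
    (A : Finset α) (hA : A ⊆ E) (a : α) (ha : a ∈ E)
    (Y : Finset α) (hY : Y ⊆ E) (hYne : Y.Nonempty)
    (hmax : ∀ y ∈ Y \ A, marginal f A {y} / w y ≤ marginal f A {a} / w a) :
    (f Y - f A) / wt w Y ≤ marginal f A {a} / w a := by
  set r := marginal f A {a} / w a with hr
  have hwa : 0 < w a := hw a ha
  have haE : A ∪ {a} ⊆ E := Finset.union_subset hA (by simpa using ha)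
  have hrnn : 0 ≤ r := by
    have : f A ≤ f (A ∪ {a}) := hmono A (A ∪ {a}) Finset.subset_union_left haE
    have : 0 ≤ marginal f A {a} := by simpa [marginal] using sub_nonneg.2 this
    exact div_nonneg this hwa.le
  have hwY : 0 < wt w Y := by
    obtain ⟨y, hy⟩ := hYne
    exact Finset.sum_pos' (fun e he => (hw e (hY he)).le) ⟨y, hy, hw y (hY hy)⟩
  rw [div_le_iff₀ hwY]
  have hsum := submodular_subadd E f hsub A hA Y hY
  have hY' : f Y ≤ f (A ∪ Y) := hmono Y (A ∪ Y) Finset.subset_union_right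
    (Finset.union_subset hA hY)
  have hterm : ∀ y ∈ Y \ A, f (insert y A) - f A ≤ r * w y := by
    intro y hy
    have hyE : y ∈ E := hY (Finset.mem_sdiff.1 hy).1
    have hwy : 0 < w y := hw y hyE
    have := hmax y hy
    have h1 : marginal f A {y} ≤ r * w y := by
      rw [← div_le_iff₀ hwy] at *
      exact this
    have h2 : A ∪ {y} = insert y A := by rw [Finset.union_comm, ← Finset.insert_eq]
    simpa [marginal, h2] using h1
  have hs2 : ∑ e ∈ Y \ A, (f (insert e A) - f A) ≤ ∑ e ∈ Y \ A, r * w e :=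
    Finset.sum_le_sum hterm
  have hs3 : ∑ e ∈ Y \ A, r * w e = r * wt w (Y \ A) := by
    rw [wt, Finset.mul_sum]
  have hs4 : wt w (Y \ A) ≤ wt w Y :=
    Finset.sum_le_sum_of_subset_of_nonneg (Finset.sdiff_subset)
      (fun e he _ => (hw e (hY he)).le)
  have hs5 : r * wt w (Y \ A) ≤ r * wt w Y := by
    exact mul_le_mul_of_nonneg_left hs4 hrnn
  linarith
end

section
/- The bounding function h is continuous on [0, ∞). That is, with the data of the bounding function (partition X_1, …, X_k of X with densities r_1 ≥ … ≥ r_k > 0, breakpoints D_0 ≤ D_1 ≤ … ≤ D_{k−1}, and h defined piecewise by h(u) = f(S_j) − r_j·w(S_j)·exp(−(u − D_{j−1})/w(S_j)) on [D_{j−1}, D_j)), for every j ∈ [k−1] it holds that lim_{u↗D_j} h(u) = h(D_j). -/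
open Finset

variable {α : Type*}

/-- `S_j = X_1 ∪ … ∪ X_j` (with `S_0 = ∅`), for a partition indexed by `1, …, k`. -/
def partS [DecidableEq α] (X : ℕ → Finset α) (j : ℕ) : Finset α :=
  (Finset.Icc 1 j).biUnion X

/-- The density `r_j = f_{S_{j-1}}(X_j) / w(X_j)`. -/
noncomputable def partR [DecidableEq α] (f : Finset α → ℝ) (w : α → ℝ)
    (X : ℕ → Finset α) (j : ℕ) : ℝ :=
  marginal f (partS X (j - 1)) (X j) / wt w (X j)

/-- The breakpoint `D_j = ∑_{i=1}^{j} w(X_i)·ln(r_i / r_{j+1})` (so `D_0 = 0`). -/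
noncomputable def partD [DecidableEq α] (f : Finset α → ℝ) (w : α → ℝ)
    (X : ℕ → Finset α) (j : ℕ) : ℝ :=
  ∑ i ∈ Finset.Icc 1 j, wt w (X i) * Real.log (partR f w X i / partR f w X (j + 1))

/-- the bounding function `h` is continuous on `[0, ∞)`: for every
`j ∈ [k-1]`, the left limit of `h` at `D_j` (within the domain `[0, ∞)`) equals `h(D_j)`. -/
theorem bounding_function_continuous [DecidableEq α] (E : Finset α) (f : Finset α → ℝ)
    (w : α → ℝ) (W : ℝ)
    (hf0 : NonnegOn E f) (hmono : MonotoneOnSets E f) (hsub : SubmodularOn E f)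
    (hw : ∀ e ∈ E, 0 < w e) (hW : 0 ≤ W)
    (Xset : Finset α) (hXE : Xset ⊆ E) (hXw : wt w Xset ≤ W)
    (k : ℕ) (hk : 1 ≤ k) (X : ℕ → Finset α)
    (hXne : ∀ i ∈ Finset.Icc 1 k, (X i).Nonempty)
    (hdisj : ∀ i ∈ Finset.Icc 1 k, ∀ j ∈ Finset.Icc 1 k, i ≠ j → Disjoint (X i) (X j))
    (hcover : (Finset.Icc 1 k).biUnion X = Xset)
    (hr : ∀ j ∈ Finset.Icc 1 (k - 1), partR f w X (j + 1) ≤ partR f w X j)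
    (hrpos : ∀ j ∈ Finset.Icc 1 k, 0 < partR f w X j)
    (h : ℝ → ℝ)
    (hh : ∀ j ∈ Finset.Icc 1 k, ∀ u : ℝ, partD f w X (j - 1) ≤ u →
      (j = k ∨ u < partD f w X j) →
      h u = f (partS X j) - partR f w X j * wt w (partS X j) *
        Real.exp (-(u - partD f w X (j - 1)) / wt w (partS X j))) :
    ∀ j ∈ Finset.Icc 1 (k - 1),
      Filter.Tendsto h (nhdsWithin (partD f w X j) (Set.Ico 0 (partD f w X j)))
        (nhds (h (partD f w X j))) := by
  classical
  intro j hj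
  rw [Finset.mem_Icc] at hj
  obtain ⟨hj1, hjk⟩ := hj
  have hk2 : 2 ≤ k := by omega
  -- basic facts
  have hXsubE : ∀ i ∈ Finset.Icc 1 k, X i ⊆ E := fun i hi =>
    (Finset.subset_biUnion_of_mem X hi).trans (hcover ▸ hXE)
  have hwXpos : ∀ i ∈ Finset.Icc 1 k, 0 < wt w (X i) := by
    intro i hi
    exact Finset.sum_pos (fun x hx => hw x (hXsubE i hi hx)) (hXne i hi)
  have hSsubE : ∀ m, m ≤ k → partS X m ⊆ E := by
    intro m hm x hx
    obtain ⟨i, hi, hxi⟩ := Finset.mem_biUnion.mp hx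
    rw [Finset.mem_Icc] at hi
    exact hXsubE i (Finset.mem_Icc.mpr ⟨hi.1, hi.2.trans hm⟩) hxi
  have hwSpos : ∀ m, 1 ≤ m → m ≤ k → 0 < wt w (partS X m) := by
    intro m h1 h2
    obtain ⟨e, he⟩ := hXne 1 (Finset.mem_Icc.mpr ⟨le_refl 1, hk⟩)
    have hmem : e ∈ partS X m :=
      Finset.mem_biUnion.mpr ⟨1, Finset.mem_Icc.mpr ⟨le_refl 1, h1⟩, he⟩
    exact Finset.sum_pos (fun x hx => hw x (hSsubE m h2 hx)) ⟨e, hmem⟩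
  have hSunion : ∀ m : ℕ, partS X (m+1) = partS X m ∪ X (m+1) := by
    intro m
    unfold partS
    rw [show Finset.Icc 1 (m+1) = insert (m+1) (Finset.Icc 1 m) by
      ext x; simp only [Finset.mem_Icc, Finset.mem_insert]; omega]
    rw [Finset.biUnion_insert, Finset.union_comm]
  have hwS_sum : ∀ m, m ≤ k → wt w (partS X m) = ∑ i ∈ Finset.Icc 1 m, wt w (X i) := by
    intro m hm
    apply Finset.sum_biUnion
    intro a ha b hb hab
    simp only [Finset.coe_Icc, Set.mem_Icc] at ha hb
    exact hdisj a (Finset.mem_Icc.mpr ⟨ha.1, ha.2.trans hm⟩)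
      b (Finset.mem_Icc.mpr ⟨hb.1, hb.2.trans hm⟩) hab
  have hwS_succ : ∀ m, m + 1 ≤ k →
      wt w (partS X (m+1)) = wt w (partS X m) + wt w (X (m+1)) := by
    intro m hm
    rw [hwS_sum (m+1) hm, hwS_sum m (by omega),
      Finset.sum_Icc_succ_top (by omega : 1 ≤ m + 1)]
  -- expression for D
  have hD_eq : ∀ m, m + 1 ≤ k →
      partD f w X m = (∑ i ∈ Finset.Icc 1 m, wt w (X i) * Real.log (partR f w X i))
        - wt w (partS X m) * Real.log (partR f w X (m+1)) := by
    intro m hm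
    unfold partD
    rw [hwS_sum m (by omega), Finset.sum_mul, ← Finset.sum_sub_distrib]
    apply Finset.sum_congr rfl
    intro i hi
    rw [Finset.mem_Icc] at hi
    have hri : 0 < partR f w X i := hrpos i (Finset.mem_Icc.mpr ⟨hi.1, hi.2.trans (by omega)⟩)
    have hrm : 0 < partR f w X (m+1) := hrpos (m+1) (Finset.mem_Icc.mpr ⟨by omega, hm⟩)
    rw [Real.log_div hri.ne' hrm.ne']
    ring
  have hD_diff : ∀ m, 1 ≤ m → m + 1 ≤ k →
      partD f w X m - partD f w X (m-1)
        = wt w (partS X m) * (Real.log (partR f w X m) - Real.log (partR f w X (m+1))) := by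
    intro m h1 h2
    obtain ⟨n, rfl⟩ : ∃ n, m = n + 1 := ⟨m - 1, by omega⟩
    simp only [Nat.add_sub_cancel]
    rw [hD_eq (n+1) h2, hD_eq n (by omega),
      Finset.sum_Icc_succ_top (by omega : 1 ≤ n + 1), hwS_succ n (by omega)]
    ring
  have hD0 : partD f w X 0 = 0 := by
    unfold partD
    rw [show Finset.Icc 1 0 = (∅ : Finset ℕ) by simp]
    simp
  -- monotonicity of D
  have hstep : ∀ m, 1 ≤ m → m + 1 ≤ k → partD f w X (m-1) ≤ partD f w X m := by
    intro m h1 h2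
    have hle : partR f w X (m+1) ≤ partR f w X m := hr m (Finset.mem_Icc.mpr ⟨h1, by omega⟩)
    have hp1 : 0 < partR f w X (m+1) := hrpos (m+1) (Finset.mem_Icc.mpr ⟨by omega, h2⟩)
    have hlog : Real.log (partR f w X (m+1)) ≤ Real.log (partR f w X m) :=
      Real.log_le_log hp1 hle
    have hW : 0 < wt w (partS X m) := hwSpos m h1 (by omega)
    nlinarith [hD_diff m h1 h2]
  have hDmono : ∀ a b, a ≤ b → b + 1 ≤ k → partD f w X a ≤ partD f w X b := by
    intro a b hab hbk
    induction b with
    | zero => simp [Nat.le_zero.mp hab]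
    | succ n ih =>
      rcases Nat.eq_or_lt_of_le hab with rfl | hlt
      · exact le_refl _
      · refine le_trans (ih (by omega) (by omega)) ?_
        have := hstep (n+1) (by omega) hbk
        simpa using this
  -- key identity
  have hIdA : ∀ m, 1 ≤ m → m + 1 ≤ k →
      f (partS X m) - partR f w X m * wt w (partS X m) *
        Real.exp (-(partD f w X m - partD f w X (m-1)) / wt w (partS X m))
      = f (partS X (m+1)) - partR f w X (m+1) * wt w (partS X (m+1)) := by
    intro m h1 h2
    have hrm : 0 < partR f w X m := hrpos m (Finset.mem_Icc.mpr ⟨h1, by omega⟩)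
    have hrm1 : 0 < partR f w X (m+1) := hrpos (m+1) (Finset.mem_Icc.mpr ⟨by omega, h2⟩)
    have hWm : 0 < wt w (partS X m) := hwSpos m h1 (by omega)
    have hwX1 : 0 < wt w (X (m+1)) := hwXpos (m+1) (Finset.mem_Icc.mpr ⟨by omega, h2⟩)
    have hexp : Real.exp (-(partD f w X m - partD f w X (m-1)) / wt w (partS X m))
        = partR f w X (m+1) / partR f w X m := by
      rw [hD_diff m h1 h2]
      have harg : -(wt w (partS X m) * (Real.log (partR f w X m)
          - Real.log (partR f w X (m+1)))) / wt w (partS X m)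
          = Real.log (partR f w X (m+1)) - Real.log (partR f w X m) := by
        field_simp
        ring
      rw [harg, Real.exp_sub, Real.exp_log hrm1, Real.exp_log hrm]
    have hmarg : f (partS X (m+1)) = f (partS X m) + partR f w X (m+1) * wt w (X (m+1)) := by
      have hrdef : partR f w X (m+1) = (f (partS X (m+1)) - f (partS X m)) / wt w (X (m+1)) := by
        unfold partR marginal
        simp only [Nat.add_sub_cancel]
        rw [← hSunion m]
      rw [hrdef, div_mul_cancel₀ _ hwX1.ne']
      ring
    rw [hexp, hmarg, hwS_succ m h2]
    field_simp
    ring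
  -- constancy across degenerate segments
  have hconst : ∀ q, 1 ≤ q → q + 1 ≤ k → partD f w X q = partD f w X (q-1) →
      f (partS X q) - partR f w X q * wt w (partS X q)
        = f (partS X (q+1)) - partR f w X (q+1) * wt w (partS X (q+1)) := by
    intro q h1 h2 heq
    have := hIdA q h1 h2
    rw [heq, sub_self, neg_zero, zero_div, Real.exp_zero, mul_one] at this
    exact this
  -- choose m : least index with D m = D j
  have hexm : ∃ m, 1 ≤ m ∧ partD f w X m = partD f w X j := ⟨j, hj1, rfl⟩
  set m := Nat.find hexm with hmdef
  obtain ⟨hm1, hmj⟩ := Nat.find_spec hexm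
  have hmlej : m ≤ j := Nat.find_min' hexm ⟨hj1, rfl⟩
  -- choose p : least index ≥ j+1 with (p = k ∨ D j < D p)
  have hexp' : ∃ p, j + 1 ≤ p ∧ (p = k ∨ partD f w X j < partD f w X p) :=
    ⟨k, by omega, Or.inl rfl⟩
  set p := Nat.find hexp' with hpdef
  obtain ⟨hpj, hpQ⟩ := Nat.find_spec hexp'
  have hplek : p ≤ k := Nat.find_min' hexp' ⟨by omega, Or.inl rfl⟩
  -- all breakpoints in [m, p-1] equal D j
  have hall : ∀ q, m ≤ q → q ≤ p - 1 → partD f w X q = partD f w X j := by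
    intro q hq1 hq2
    rcases le_or_gt q j with hqj | hqj
    · have h1 : partD f w X m ≤ partD f w X q := hDmono m q hq1 (by omega)
      have h2 : partD f w X q ≤ partD f w X j := hDmono q j hqj (by omega)
      rw [hmj] at h1
      linarith
    · have hqlt : q < p := by omega
      have hnq := Nat.find_min hexp' hqlt
      simp only [not_and, not_or, not_lt] at hnq
      have h3 := hnq (by omega)
      have h4 : partD f w X j ≤ partD f w X q := hDmono j q (by omega) (by omega)
      linarith [h3.2]
  have hDp1 : partD f w X (p-1) = partD f w X j := hall (p-1) (by omega) (le_refl _)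
  -- value of h at D j
  have hhp : h (partD f w X j) = f (partS X p) - partR f w X p * wt w (partS X p) := by
    have := hh p (Finset.mem_Icc.mpr ⟨by omega, hplek⟩) (partD f w X j)
      (le_of_eq hDp1) hpQ
    rw [this, hDp1, sub_self, neg_zero, zero_div, Real.exp_zero, mul_one]
  -- case D j = 0
  have hDjnonneg : 0 ≤ partD f w X j := by
    have := hDmono 0 j (by omega) (by omega)
    rwa [hD0] at this
  rcases eq_or_lt_of_le hDjnonneg with hDj0 | hDjpos
  · rw [← hDj0, Set.Ico_self, nhdsWithin_empty]
    exact Filter.tendsto_bot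
  -- case D j > 0 : D (m-1) < D j
  have hDm1 : partD f w X (m-1) < partD f w X j := by
    rcases Nat.eq_or_lt_of_le hm1 with h1 | h1
    · have h0 : m - 1 = 0 := by omega
      rw [h0, hD0]; exact hDjpos
    · have hne := Nat.find_min hexm (show m - 1 < m by omega)
      simp only [not_and] at hne
      have hne2 : partD f w X (m-1) ≠ partD f w X j := hne (by omega)
      have hle : partD f w X (m-1) ≤ partD f w X m := hDmono (m-1) m (by omega) (by omega)
      rw [hmj] at hle
      exact lt_of_le_of_ne hle hne2
  -- the continuous piece g
  set g : ℝ → ℝ := fun u => f (partS X m) - partR f w X m * wt w (partS X m) *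
    Real.exp (-(u - partD f w X (m-1)) / wt w (partS X m)) with hgdef
  have hgcont : Continuous g := by
    apply Continuous.sub continuous_const
    apply Continuous.mul continuous_const
    exact Real.continuous_exp.comp (by fun_prop)
  -- h agrees with g near D j from the left
  have hev : h =ᶠ[nhdsWithin (partD f w X j) (Set.Ico 0 (partD f w X j))] g := by
    have h1 : ∀ᶠ u in nhds (partD f w X j), partD f w X (m-1) < u :=
      eventually_gt_nhds hDm1
    filter_upwards [eventually_nhdsWithin_of_eventually_nhds h1, self_mem_nhdsWithin]
      with u hu hu2
    have humem : u < partD f w X m := by rw [hmj]; exact hu2.2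
    exact hh m (Finset.mem_Icc.mpr ⟨hm1, by omega⟩) u hu.le (Or.inr humem)
  -- value chain : g (D j) = h (D j)
  have hchain : ∀ t, m + 1 ≤ t → t ≤ p →
      f (partS X t) - partR f w X t * wt w (partS X t)
        = f (partS X (m+1)) - partR f w X (m+1) * wt w (partS X (m+1)) := by
    intro t h1 h2
    induction t with
    | zero => omega
    | succ n ih =>
      rcases Nat.eq_or_lt_of_le h1 with heq | hlt
      · rw [← heq]
      · have hn1 : m + 1 ≤ n := by omega
        have hDn : partD f w X n = partD f w X (n-1) := by
          rw [hall n (by omega) (by omega), hall (n-1) (by omega) (by omega)]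
        rw [← hconst n (by omega) (by omega) hDn]
        exact ih hn1 (by omega)
  have hgval : g (partD f w X j) = h (partD f w X j) := by
    have h1 : g (partD f w X j) = f (partS X (m+1)) -
        partR f w X (m+1) * wt w (partS X (m+1)) := by
      rw [hgdef]
      simp only
      rw [← hmj]
      exact hIdA m hm1 (by omega)
    rw [h1, hhp]
    exact (hchain p (by omega) (le_refl _)).symm
  rw [← hgval]
  exact Filter.Tendsto.congr' hev.symm
    ((hgcont.tendsto _).mono_left nhdsWithin_le_nhds)
end

section
/- Let (E, f, w, W) be an MSK instance, let A be the output of a greedy execution on it, and let V be the associated value function. Let X ⊆ E with w(X) ≤ W and let X_1, …, X_k be a partition of X into nonempty sets with r_1 ≥ r_2 ≥ … ≥ r_k > 0, where r_j := f_{S_{j−1}}(X_j)/w(X_j) and S_j := X_1 ∪ … ∪ X_j. Let h be the bounding function of X_1, …, X_k, and let W_max := min( W − max_{e∈X} w(e), w(A) ). Then V(u) ≥ h(u) for every u ∈ [0, W_max]. -/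
open Finset

variable {α : Type*}

/-!
While every element of `X` still fits, the greedy density `ρ_i` dominates the gain of `X`:
submodularity and the greedy choice give `f S - f A_i ≤ ρ_i w(S)` for every `S ⊆ X`. Since `V`
has slope `ρ_i` there, the gap `f S - V u` shrinks at rate at least `(f S - V u) / w(S)`, i.e.
`(f S - V u) · exp (u / w(S))` is non-increasing on `[0, W_max]`. Applied to `S = S_j` from the
breakpoint `D_{j-1}` this is exactly the `j`-th piece of `h`; at `D_j` the bound has decayed to
`r_{j+1} w(S_j)`, and adding the gain `r_{j+1} w(X_{j+1})` of the next part starts the next piece.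
-/

open Real

section

open Set

theorem AntitoneOn.Icc_union_Icc {g : ℝ → ℝ} {a b c : ℝ} (h₁ : AntitoneOn g (Icc a b))
    (h₂ : AntitoneOn g (Icc b c)) : AntitoneOn g (Icc a c) := by
  intro x hx y hy hxy
  rcases le_total y b with hyb | hby
  · exact h₁ ⟨hx.1, hxy.trans hyb⟩ ⟨hx.1.trans hxy, hyb⟩ hxy
  rcases le_total b x with hbx | hxb
  · exact h₂ ⟨hbx, hxy.trans hy.2⟩ ⟨hby, hy.2⟩ hxy
  · exact (h₂ ⟨le_rfl, hby.trans hy.2⟩ ⟨hby, hy.2⟩ hby).trans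
      (h₁ ⟨hx.1, hxb⟩ ⟨hx.1.trans hxb, le_rfl⟩ hxb)

theorem sub_mul_le_mul_exp_neg_div {a ρ δ s : ℝ} (hs : 0 < s) (hρ : 0 ≤ ρ) (hδ : 0 ≤ δ)
    (ha : a ≤ ρ * s) : a - ρ * δ ≤ a * exp (-δ / s) := by
  rcases le_or_gt a 0 with ha0 | ha0
  · have : exp (-δ / s) ≤ 1 :=
      exp_le_one_iff.2 (div_nonpos_of_nonpos_of_nonneg (by linarith) hs.le)
    nlinarith [mul_nonneg hρ hδ]
  · have hexp : 1 - δ / s ≤ exp (-δ / s) := by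
      linarith [add_one_le_exp (-δ / s), neg_div s δ]
    have hρδ : a * (δ / s) ≤ ρ * δ := by
      rw [← mul_div_assoc, div_le_iff₀ hs]; nlinarith
    calc a - ρ * δ ≤ a * (1 - δ / s) := by linarith
      _ ≤ a * exp (-δ / s) := mul_le_mul_of_nonneg_left hexp ha0.le

theorem antitoneOn_sub_affine_mul_exp {c y t ρ s : ℝ} (hs : 0 < s) (hρ : 0 ≤ ρ)
    (hc : c - y ≤ ρ * s) :
    AntitoneOn (fun u => (c - (y + (u - t) * ρ)) * exp (u / s)) (Ici t) := by
  intro p hp q _ hpq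
  have hstep := sub_mul_le_mul_exp_neg_div (a := c - (y + (p - t) * ρ)) hs hρ (sub_nonneg.2 hpq)
    (by nlinarith [mul_nonneg (sub_nonneg.2 (show t ≤ p from hp)) hρ])
  have hexp : exp (-(q - p) / s) * exp (q / s) = exp (p / s) := by
    rw [← exp_add]; congr 1; field_simp; ring
  calc (c - (y + (q - t) * ρ)) * exp (q / s)
      = (c - (y + (p - t) * ρ) - ρ * (q - p)) * exp (q / s) := by ring
    _ ≤ (c - (y + (p - t) * ρ)) * exp (-(q - p) / s) * exp (q / s) :=
      mul_le_mul_of_nonneg_right hstep (exp_nonneg _)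
    _ = (c - (y + (p - t) * ρ)) * exp (p / s) := by rw [mul_assoc, hexp]

theorem antitoneOn_sub_mul_exp_of_piecewise_affine {n : ℕ} {t y : ℕ → ℝ}
    {ρ : Fin n → ℝ} {V : ℝ → ℝ} {c s T : ℝ} (hs : 0 < s) (hρ : ∀ i, 0 ≤ ρ i)
    (hV : ∀ (i : Fin n) (u : ℝ), t i ≤ u → u ≤ t (i + 1) → V u = y i + (u - t i) * ρ i)
    (hc : ∀ i : Fin n, t i ≤ T → c - y i ≤ ρ i * s) :
    AntitoneOn (fun u => (c - V u) * exp (u / s)) (Icc (t 0) (min T (t n))) := by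
  suffices ∀ m ≤ n, AntitoneOn (fun u => (c - V u) * exp (u / s)) (Icc (t 0) (min T (t m))) from
    this n le_rfl
  intro m
  induction m with
  | zero => exact fun _ => (subsingleton_Icc_of_ge (min_le_right _ _)).antitoneOn _
  | succ m ih =>
    intro hm
    refine (ih (by omega)).Icc_union_Icc ?_
    rcases le_or_gt (t m) T with hmT | hTm
    · let i : Fin n := ⟨m, hm⟩
      rw [min_eq_right hmT]
      refine ((antitoneOn_sub_affine_mul_exp hs (hρ i) (hc i hmT)).mono
        fun u hu => hu.1).congr fun u hu => ?_
      rw [hV i u hu.1 (hu.2.trans (min_le_right _ _))]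
    · rw [min_eq_left hTm.le]
      exact (subsingleton_Icc_of_ge (min_le_left _ _)).antitoneOn _

theorem sub_le_mul_exp_of_antitoneOn {V : ℝ → ℝ} {I : Set ℝ} {c s a b B : ℝ}
    (hV : AntitoneOn (fun u => (c - V u) * exp (u / s)) I) (ha : a ∈ I) (hb : b ∈ I)
    (hab : a ≤ b) (hB : c - V a ≤ B) : c - V b ≤ B * exp (-(b - a) / s) := by
  have h := (hV ha hb hab).trans (mul_le_mul_of_nonneg_right hB (exp_nonneg (a / s)))
  rwa [← le_div_iff₀ (exp_pos _), mul_div_assoc, ← exp_sub, ← sub_div, ← neg_sub b a] at h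

end

theorem wt_le_wt {w : α → ℝ} {S T : Finset α} (hST : S ⊆ T) (hw : ∀ e ∈ T, 0 ≤ w e) :
    wt w S ≤ wt w T :=
  sum_le_sum_of_subset_of_nonneg hST fun e he _ => hw e he

theorem SubmodularOn.marginal_le_sum_sdiff [DecidableEq α] {E : Finset α} {f : Finset α → ℝ}
    (hsub : SubmodularOn E f) {A S : Finset α} (hA : A ⊆ E) (hS : S ⊆ E) :
    marginal f A S ≤ ∑ e ∈ S \ A, marginal f A {e} := by
  induction S using Finset.induction_on with
  | empty => simp [marginal]
  | @insert x S hxS ih =>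
    have hSE : S ⊆ E := (subset_insert x S).trans hS
    by_cases hxA : x ∈ A
    · rw [insert_sdiff_of_mem S hxA]
      simpa [marginal, union_insert, hxA] using ih hSE
    · have hx : f (insert x (A ∪ S)) - f (A ∪ S) ≤ f (insert x A) - f A :=
        hsub A (A ∪ S) subset_union_left (union_subset hA hSE) x (hS (mem_insert_self x S))
          (by simp [hxA, hxS])
      rw [insert_sdiff_of_notMem S hxA, sum_insert fun h => hxS (mem_sdiff.1 h).1]
      simp only [marginal, union_insert, union_comm A {x}, ← insert_eq] at ih ⊢
      linarith [ih hSE]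

namespace GreedyExec

variable [DecidableEq α] {E : Finset α} {f : Finset α → ℝ} {w : α → ℝ} {W : ℝ}
  (g : GreedyExec E f w W) {V : ℝ → ℝ}

noncomputable def density (i : Fin g.order.length) : ℝ :=
  marginal f (g.sol i) {g.order.get i} / w (g.order.get i)

def IsValueFunction (V : ℝ → ℝ) : Prop :=
  ∀ (i : Fin g.order.length) (u : ℝ), wt w (g.sol i) ≤ u → u ≤ wt w (g.sol (i + 1)) →
    V u = f (g.sol i) + (u - wt w (g.sol i)) * g.density i

theorem mem_order_iff {e : α} : e ∈ g.order ↔ e ∈ E := by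
  rw [← List.mem_toFinset, g.ground]

theorem get_mem (i : Fin g.order.length) : g.order.get i ∈ E :=
  g.mem_order_iff.1 (List.get_mem _ _)

theorem sol_subset_sol_succ {i : ℕ} (hi : i < g.order.length) : g.sol i ⊆ g.sol (i + 1) := by
  rcases le_or_gt (wt w (g.sol i) + w (g.order.get ⟨i, hi⟩)) W with hfit | hfit
  · rw [g.step_add i hi hfit]; exact subset_insert _ _
  · rw [g.step_skip i hi hfit]

theorem sol_mono {i j : ℕ} (hij : i ≤ j) (hj : j ≤ g.order.length) : g.sol i ⊆ g.sol j := by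
  induction j, hij using Nat.le_induction with
  | base => exact subset_rfl
  | succ j _ ih => exact (ih (by omega)).trans (g.sol_subset_sol_succ hj)

theorem sol_subset_ground {i : ℕ} (hi : i ≤ g.order.length) : g.sol i ⊆ E := by
  induction i with
  | zero => simp [g.sol_zero]
  | succ i ih =>
    rcases le_or_gt (wt w (g.sol i) + w (g.order.get ⟨i, hi⟩)) W with hfit | hfit
    · rw [g.step_add i hi hfit]; exact insert_subset (g.get_mem _) (ih (by omega))
    · rw [g.step_skip i hi hfit]; exact ih (by omega)

theorem density_nonneg (hmono : MonotoneOnSets E f) (hw : ∀ e ∈ E, 0 ≤ w e)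
    (i : Fin g.order.length) : 0 ≤ g.density i := by
  have hsol := g.sol_subset_ground i.2.le
  refine div_nonneg (sub_nonneg.2 ?_) (hw _ (g.get_mem i))
  exact hmono _ _ subset_union_left (union_subset hsol (singleton_subset_iff.2 (g.get_mem i)))

/-- Had `e` been considered before step `i`, it would have fitted then and been selected. -/
theorem mem_drop_of_notMem_sol (hw : ∀ e ∈ E, 0 ≤ w e) {i : ℕ} (hi : i ≤ g.order.length)
    {e : α} (he : e ∈ E) (heA : e ∉ g.sol i) (hfit : wt w (g.sol i) + w e ≤ W) :
    e ∈ g.order.drop i := by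
  obtain ⟨p, hp, rfl⟩ := List.mem_iff_getElem.1 (g.mem_order_iff.2 he)
  rcases lt_or_ge p i with hpi | hip
  · have hfit' : wt w (g.sol p) + w (g.order.get ⟨p, hp⟩) ≤ W :=
      (add_le_add_left (wt_le_wt (g.sol_mono hpi.le hi) fun e he' =>
        hw e (g.sol_subset_ground hi he')) _).trans (by simpa using hfit)
    refine absurd (g.sol_mono hpi hi ?_) heA
    rw [g.step_add p hp hfit']
    exact mem_insert_self _ _
  · exact List.mem_drop_iff_getElem.2 ⟨p - i, by omega, by congr 1; omega⟩

theorem sub_le_density_mul_wt (hmono : MonotoneOnSets E f) (hsub : SubmodularOn E f)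
    (hw : ∀ e ∈ E, 0 < w e) (i : Fin g.order.length) {S : Finset α} (hSE : S ⊆ E)
    (hfit : ∀ e ∈ S, wt w (g.sol i) + w e ≤ W) :
    f S - f (g.sol i) ≤ g.density i * wt w S := by
  have hw' : ∀ e ∈ E, 0 ≤ w e := fun e he => (hw e he).le
  have hsol := g.sol_subset_ground i.2.le
  have hdensity : ∀ e ∈ S \ g.sol i, marginal f (g.sol i) {e} ≤ g.density i * w e := by
    intro e he
    obtain ⟨heS, heA⟩ := mem_sdiff.1 he
    rw [← div_le_iff₀ (hw e (hSE heS))]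
    exact g.greedy_max i i.2 e (g.mem_drop_of_notMem_sol hw' i.2.le (hSE heS) heA (hfit e heS))
  calc f S - f (g.sol i) ≤ marginal f (g.sol i) S := by
        rw [marginal]; linarith [hmono _ _ subset_union_right (union_subset hsol hSE)]
    _ ≤ ∑ e ∈ S \ g.sol i, marginal f (g.sol i) {e} := hsub.marginal_le_sum_sdiff hsol hSE
    _ ≤ ∑ e ∈ S \ g.sol i, g.density i * w e := sum_le_sum hdensity
    _ = g.density i * wt w (S \ g.sol i) := (mul_sum _ _ _).symm
    _ ≤ g.density i * wt w S := mul_le_mul_of_nonneg_left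
        (wt_le_wt sdiff_subset fun e he => hw' e (hSE he)) (g.density_nonneg hmono hw' i)

theorem value_zero (hw : ∀ e ∈ E, 0 ≤ w e) (hV : g.IsValueFunction V)
    (hn : 0 < g.order.length) : V 0 = f ∅ := by
  have h := hV ⟨0, hn⟩ 0 (by simp [g.sol_zero, wt])
    (sum_nonneg fun e he => hw e (g.sol_subset_ground hn he))
  simpa [g.sol_zero, wt] using h

theorem antitoneOn_sub_value_mul_exp (hmono : MonotoneOnSets E f) (hsub : SubmodularOn E f)
    (hw : ∀ e ∈ E, 0 < w e) (hV : g.IsValueFunction V) {Y S : Finset α} (hYE : Y ⊆ E)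
    (hY : Y.Nonempty) (hSY : S ⊆ Y) (hS : S.Nonempty) :
    AntitoneOn (fun u => (f S - V u) * exp (u / wt w S))
      (Set.Icc 0 (min (W - Y.sup' hY w) (wt w g.out))) := by
  have hSE := hSY.trans hYE
  have h := antitoneOn_sub_mul_exp_of_piecewise_affine (t := fun i => wt w (g.sol i))
    (y := fun i => f (g.sol i)) (c := f S) (s := wt w S) (T := W - Y.sup' hY w)
    (sum_pos (fun e he => hw e (hSE he)) hS)
    (g.density_nonneg hmono fun e he => (hw e he).le) hV
    fun i hi => g.sub_le_density_mul_wt hmono hsub hw i hSE fun e he => by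
      linarith [le_sup' w (hSY he)]
  rwa [g.sol_zero, show wt w ∅ = 0 from sum_empty] at h

end GreedyExec

section BoundingFunction

variable [DecidableEq α] {f : Finset α → ℝ} {w : α → ℝ} {X : ℕ → Finset α} {k : ℕ}

theorem partS_zero : partS X 0 = ∅ := by simp [partS]

theorem partS_succ (j : ℕ) : partS X (j + 1) = partS X j ∪ X (j + 1) := by
  rw [partS, partS, ← Ico_insert_right (by omega : 1 ≤ j + 1), Ico_add_one_right_eq_Icc,
    biUnion_insert, union_comm]

theorem wt_partS (hdisj : ∀ i ∈ Icc 1 k, ∀ j ∈ Icc 1 k, i ≠ j → Disjoint (X i) (X j))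
    {j : ℕ} (hj : j ≤ k) : wt w (partS X j) = ∑ i ∈ Icc 1 j, wt w (X i) :=
  sum_biUnion fun a ha b hb hab => hdisj a (Icc_subset_Icc_right hj ha) b
    (Icc_subset_Icc_right hj hb) hab

theorem partR_succ_mul_wt (j : ℕ) (hX : wt w (X (j + 1)) ≠ 0) :
    partR f w X (j + 1) * wt w (X (j + 1)) = f (partS X (j + 1)) - f (partS X j) := by
  rw [partR, Nat.add_sub_cancel, div_mul_cancel₀ _ hX, marginal, partS_succ]

theorem partD_zero : partD f w X 0 = 0 := by simp [partD]

theorem partD_succ {j : ℕ} (hrpos : ∀ i ∈ Icc 1 (j + 2), 0 < partR f w X i) :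
    partD f w X (j + 1) = partD f w X j +
      (∑ i ∈ Icc 1 (j + 1), wt w (X i)) * log (partR f w X (j + 1) / partR f w X (j + 2)) := by
  have hne : ∀ i ∈ Icc 1 (j + 2), partR f w X i ≠ 0 := fun i hi => (hrpos i hi).ne'
  have hj1 : j + 1 ∈ Icc 1 (j + 2) := mem_Icc.2 ⟨by omega, by omega⟩
  have hDj : partD f w X j =
      ∑ i ∈ Icc 1 (j + 1), wt w (X i) * log (partR f w X i / partR f w X (j + 1)) := by
    rw [sum_Icc_succ_top (by omega), div_self (hne _ hj1), log_one, mul_zero, add_zero, partD]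
  rw [hDj, partD, sum_mul, ← sum_add_distrib]
  refine sum_congr rfl fun i hi => ?_
  have hi' : i ∈ Icc 1 (j + 2) := Icc_subset_Icc_right (by omega) hi
  rw [← mul_add, ← log_mul (div_ne_zero (hne i hi') (hne _ hj1))
    (div_ne_zero (hne _ hj1) (hne _ (mem_Icc.2 ⟨by omega, le_rfl⟩))),
    div_mul_div_cancel₀ (hne _ hj1)]

theorem exp_neg_partD_succ_sub {j : ℕ} (hrpos : ∀ i ∈ Icc 1 (j + 2), 0 < partR f w X i)
    (hw : ∑ i ∈ Icc 1 (j + 1), wt w (X i) ≠ 0) :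
    exp (-(partD f w X (j + 1) - partD f w X j) / ∑ i ∈ Icc 1 (j + 1), wt w (X i)) =
      partR f w X (j + 2) / partR f w X (j + 1) := by
  rw [partD_succ hrpos, add_sub_cancel_left, neg_div, mul_div_cancel_left₀ _ hw, exp_neg,
    exp_log (div_pos (hrpos _ (mem_Icc.2 ⟨by omega, by omega⟩)) (hrpos _ (mem_Icc.2
      ⟨by omega, le_rfl⟩))), inv_div]

variable (hwX : ∀ i ∈ Icc 1 k, 0 < wt w (X i))
  (hdisj : ∀ i ∈ Icc 1 k, ∀ j ∈ Icc 1 k, i ≠ j → Disjoint (X i) (X j))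
  (hr : ∀ j ∈ Icc 1 (k - 1), partR f w X (j + 1) ≤ partR f w X j)
  (hrpos : ∀ j ∈ Icc 1 k, 0 < partR f w X j)

include hwX hdisj in
theorem wt_partS_pos {j : ℕ} (h1 : 1 ≤ j) (hj : j ≤ k) : 0 < wt w (partS X j) := by
  rw [wt_partS hdisj hj]
  exact sum_pos (fun i hi => hwX i (Icc_subset_Icc_right hj hi)) ⟨1, mem_Icc.2 ⟨le_rfl, h1⟩⟩

include hwX hr hrpos in
theorem partD_le_partD_succ {j : ℕ} (hj : j + 2 ≤ k) :
    partD f w X j ≤ partD f w X (j + 1) := by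
  rw [partD_succ fun i hi => hrpos i (Icc_subset_Icc_right hj hi)]
  refine le_add_of_nonneg_right (mul_nonneg
    (sum_nonneg fun i hi => (hwX i (Icc_subset_Icc_right (by omega) hi)).le) (log_nonneg ?_))
  rw [one_le_div (hrpos _ (mem_Icc.2 ⟨by omega, hj⟩))]
  exact hr (j + 1) (mem_Icc.2 ⟨by omega, by omega⟩)

include hwX hr hrpos in
theorem partD_nonneg : ∀ j, j + 1 ≤ k → 0 ≤ partD f w X j
  | 0, _ => partD_zero.ge
  | j + 1, hj =>
    (partD_nonneg j (by omega)).trans (partD_le_partD_succ hwX hr hrpos hj)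

include hwX hdisj hr hrpos in
theorem sub_le_partR_mul_exp {V : ℝ → ℝ} {U : ℝ} (hV0 : V 0 = f ∅)
    (hV : ∀ j ∈ Icc 1 k,
      AntitoneOn (fun u => (f (partS X j) - V u) * exp (u / wt w (partS X j))) (Set.Icc 0 U)) :
    ∀ j, j + 1 ≤ k → ∀ v ∈ Set.Icc (partD f w X j) U,
      f (partS X (j + 1)) - V v ≤ partR f w X (j + 1) * wt w (partS X (j + 1)) *
        exp (-(v - partD f w X j) / wt w (partS X (j + 1))) := by
  have hgain : ∀ j, j + 1 ≤ k → f (partS X (j + 1)) =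
      f (partS X j) + partR f w X (j + 1) * wt w (X (j + 1)) := fun j hj => by
    rw [partR_succ_mul_wt j (hwX _ (mem_Icc.2 ⟨by omega, hj⟩)).ne']; ring
  intro j
  induction j with
  | zero =>
    intro hk v hv
    rw [partD_zero] at hv ⊢
    refine sub_le_mul_exp_of_antitoneOn (hV 1 (mem_Icc.2 ⟨le_rfl, hk⟩))
      ⟨le_rfl, hv.1.trans hv.2⟩ hv hv.1 (le_of_eq ?_)
    rw [hV0, hgain 0 hk, partS_zero, partS_succ, partS_zero, empty_union]
    ring
  | succ j ih =>
    intro hj v hv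
    have hD := partD_le_partD_succ hwX hr hrpos hj
    have hD0 := partD_nonneg hwX hr hrpos (j + 1) (by omega)
    have hrj := hrpos (j + 1) (mem_Icc.2 ⟨by omega, by omega⟩)
    have hwS : wt w (partS X (j + 1)) = ∑ i ∈ Icc 1 (j + 1), wt w (X i) :=
      wt_partS hdisj (by omega)
    have hexp := exp_neg_partD_succ_sub (fun i hi => hrpos i (Icc_subset_Icc_right hj hi))
      (hwS ▸ (wt_partS_pos hwX hdisj (by omega) (by omega)).ne')
    rw [← hwS] at hexp
    have hbreak : f (partS X (j + 1)) - V (partD f w X (j + 1)) ≤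
        partR f w X (j + 2) * wt w (partS X (j + 1)) := by
      have := ih (by omega) _ ⟨hD, hv.1.trans hv.2⟩
      rwa [hexp, mul_comm, ← mul_assoc, div_mul_cancel₀ _ hrj.ne'] at this
    refine sub_le_mul_exp_of_antitoneOn (hV (j + 2) (mem_Icc.2 ⟨by omega, hj⟩))
      ⟨hD0, hv.1.trans hv.2⟩ ⟨hD0.trans hv.1, hv.2⟩ hv.1 ?_
    rw [hgain (j + 1) hj, wt_partS hdisj hj, sum_Icc_succ_top (by omega),
      ← wt_partS hdisj (by omega)]
    linarith

include hwX hdisj hr hrpos in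
theorem bounding_le_value (hk : 1 ≤ k) {V h : ℝ → ℝ} {U : ℝ} (hV0 : V 0 = f ∅)
    (hV : ∀ j ∈ Icc 1 k,
      AntitoneOn (fun u => (f (partS X j) - V u) * exp (u / wt w (partS X j))) (Set.Icc 0 U))
    (hh : ∀ j ∈ Icc 1 k, ∀ u : ℝ, partD f w X (j - 1) ≤ u →
      (j = k ∨ u < partD f w X j) →
      h u = f (partS X j) - partR f w X j * wt w (partS X j) *
        exp (-(u - partD f w X (j - 1)) / wt w (partS X j)))
    {u : ℝ} (hu : u ∈ Set.Icc 0 U) : h u ≤ V u := by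
  -- `j + 1` is the piece of `h` containing `u`.
  let P (j : ℕ) : Prop := partD f w X j ≤ u
  set j := Nat.findGreatest P (k - 1)
  have hjk : j + 1 ≤ k := by have := Nat.findGreatest_le (P := P) (k - 1); omega
  have hDu : partD f w X j ≤ u :=
    Nat.findGreatest_spec (P := P) (Nat.zero_le _) (partD_zero.trans_le hu.1)
  have hlast : j + 1 = k ∨ u < partD f w X (j + 1) := by
    refine (eq_or_lt_of_le hjk).imp id fun hlt => not_le.1 ?_
    exact Nat.findGreatest_is_greatest (Nat.lt_succ_self j) (by omega)
  have hbound := sub_le_partR_mul_exp hwX hdisj hr hrpos hV0 hV j hjk u ⟨hDu, hu.2⟩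
  rw [hh (j + 1) (mem_Icc.2 ⟨by omega, hjk⟩) u hDu hlast, Nat.add_sub_cancel]
  linarith

end BoundingFunction

theorem value_function_dominates_bounding_function_general [DecidableEq α]
    (E : Finset α) (f : Finset α → ℝ) (w : α → ℝ) (W : ℝ)
    (hmono : MonotoneOnSets E f) (hsub : SubmodularOn E f)
    (hw : ∀ e ∈ E, 0 < w e)
    (g : GreedyExec E f w W)
    (V : ℝ → ℝ)
    (hV : ∀ (i : ℕ) (hi : i < g.order.length), ∀ u : ℝ,
      wt w (g.sol i) ≤ u → u ≤ wt w (g.sol (i + 1)) →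
      V u = f (g.sol i) + (u - wt w (g.sol i)) *
        (marginal f (g.sol i) {g.order.get ⟨i, hi⟩} / w (g.order.get ⟨i, hi⟩)))
    (Xset : Finset α) (hXE : Xset ⊆ E) (hXne : Xset.Nonempty)
    (k : ℕ) (hk : 1 ≤ k) (X : ℕ → Finset α)
    (hXne' : ∀ i ∈ Finset.Icc 1 k, (X i).Nonempty)
    (hdisj : ∀ i ∈ Finset.Icc 1 k, ∀ j ∈ Finset.Icc 1 k, i ≠ j → Disjoint (X i) (X j))
    (hcover : (Finset.Icc 1 k).biUnion X = Xset)
    (hr : ∀ j ∈ Finset.Icc 1 (k - 1), partR f w X (j + 1) ≤ partR f w X j)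
    (hrpos : ∀ j ∈ Finset.Icc 1 k, 0 < partR f w X j)
    (h : ℝ → ℝ)
    (hh : ∀ j ∈ Finset.Icc 1 k, ∀ u : ℝ, partD f w X (j - 1) ≤ u →
      (j = k ∨ u < partD f w X j) →
      h u = f (partS X j) - partR f w X j * wt w (partS X j) *
        Real.exp (-(u - partD f w X (j - 1)) / wt w (partS X j))) :
    ∀ u : ℝ, 0 ≤ u → u ≤ min (W - Xset.sup' hXne w) (wt w g.out) → h u ≤ V u := by
  intro u hu0 huW
  have hV' : g.IsValueFunction V := fun i => hV i i.2
  have hXi : ∀ i ∈ Icc 1 k, X i ⊆ partS X i := fun i hi =>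
    subset_biUnion_of_mem X (mem_Icc.2 ⟨(mem_Icc.1 hi).1, le_rfl⟩)
  have hSX : ∀ j ∈ Icc 1 k, partS X j ⊆ Xset := fun j hj =>
    hcover ▸ biUnion_subset_biUnion_of_subset_left X (Icc_subset_Icc_right (mem_Icc.1 hj).2)
  have hn : 0 < g.order.length := by
    obtain ⟨x, hx⟩ := hXne
    exact List.length_pos_of_mem (g.mem_order_iff.2 (hXE hx))
  refine bounding_le_value
    (fun i hi => sum_pos (fun e he => hw e (hXE (hSX i hi (hXi i hi he)))) (hXne' i hi))
    hdisj hr hrpos hk (g.value_zero (fun e he => (hw e he).le) hV' hn)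
    (fun j hj => g.antitoneOn_sub_value_mul_exp hmono hsub hw hV' hXE hXne (hSX j hj)
      ((hXne' j hj).mono (hXi j hj)))
    hh ⟨hu0, huW⟩

/-- Lemma 2.4: if `V` is the value function of a greedy execution with
output `A`, and `h` is the bounding function of a partition `X_1, …, X_k` of a set
`X ⊆ E` with `w(X) ≤ W`, then `V(u) ≥ h(u)` for every
`u ∈ [0, min(W - max_{e∈X} w(e), w(A))]`. -/
theorem value_function_dominates_bounding_function [DecidableEq α]
    (E : Finset α) (f : Finset α → ℝ) (w : α → ℝ) (W : ℝ)
    (hf0 : NonnegOn E f) (hmono : MonotoneOnSets E f) (hsub : SubmodularOn E f)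
    (hw : ∀ e ∈ E, 0 < w e) (hW : 0 ≤ W)
    (g : GreedyExec E f w W)
    (V : ℝ → ℝ)
    (hV : ∀ (i : ℕ) (hi : i < g.order.length), ∀ u : ℝ,
      wt w (g.sol i) ≤ u → u ≤ wt w (g.sol (i + 1)) →
      V u = f (g.sol i) + (u - wt w (g.sol i)) *
        (marginal f (g.sol i) {g.order.get ⟨i, hi⟩} / w (g.order.get ⟨i, hi⟩)))
    (Xset : Finset α) (hXE : Xset ⊆ E) (hXw : wt w Xset ≤ W) (hXne : Xset.Nonempty)
    (k : ℕ) (hk : 1 ≤ k) (X : ℕ → Finset α)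
    (hXne' : ∀ i ∈ Finset.Icc 1 k, (X i).Nonempty)
    (hdisj : ∀ i ∈ Finset.Icc 1 k, ∀ j ∈ Finset.Icc 1 k, i ≠ j → Disjoint (X i) (X j))
    (hcover : (Finset.Icc 1 k).biUnion X = Xset)
    (hr : ∀ j ∈ Finset.Icc 1 (k - 1), partR f w X (j + 1) ≤ partR f w X j)
    (hrpos : ∀ j ∈ Finset.Icc 1 k, 0 < partR f w X j)
    (h : ℝ → ℝ)
    (hh : ∀ j ∈ Finset.Icc 1 k, ∀ u : ℝ, partD f w X (j - 1) ≤ u →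
      (j = k ∨ u < partD f w X j) →
      h u = f (partS X j) - partR f w X j * wt w (partS X j) *
        Real.exp (-(u - partD f w X (j - 1)) / wt w (partS X j))) :
    ∀ u : ℝ, 0 ≤ u → u ≤ min (W - Xset.sup' hXne w) (wt w g.out) → h u ≤ V u :=
  value_function_dominates_bounding_function_general E f w W hmono hsub hw g V hV Xset hXE hXne k hk
    X hXne' hdisj hcover hr hrpos h hh
end

section
/- Let E be a finite ground set, f : 2^E → ℝ_{≥0} a non-negative monotone submodular set function, and Y = {y_1, y_2, y_3} ⊆ E a set of three distinct elements ordered by greedy marginal values, i.e., f({y_1}) ≥ f({y}) for all y ∈ Y and f_{{y_1}}({y_2}) ≥ f_{{y_1}}({y}) for all y ∈ Y ∖ {y_1}. Then f({y_1, y_2}) ≥ (2/3)·f(Y). -/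
open Finset

variable {α : Type*}

/-! Submodularity gives `f Y - f {y₁, y₂} ≤ f {y₁, y₃} - f {y₁}`, which the second greedy choice
bounds by `f {y₁, y₂} - f {y₁}`; and subadditivity on the pair together with the first greedy
choice gives `f {y₁, y₂} ≤ 2 f {y₁} - f ∅`. Eliminating `f {y₁}` leaves
`2 f Y ≤ 3 f {y₁, y₂} - f ∅`, and `f ∅ ≥ 0`. -/

theorem marginal_singleton_singleton [DecidableEq α] (f : Finset α → ℝ) (a b : α) :
    marginal f {a} {b} = f {a, b} - f {a} := by
  rw [marginal, ← insert_eq]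

namespace SubmodularOn

variable [DecidableEq α] {E : Finset α} {f : Finset α → ℝ}

theorem pair_add_empty_le (hsub : SubmodularOn E f) {a b : α} (hab : a ≠ b)
    (ha : a ∈ E) (hb : b ∈ E) : f {a, b} + f ∅ ≤ f {a} + f {b} := by
  have := hsub ∅ {b} (empty_subset _) (singleton_subset_iff.2 hb) a ha
    (notMem_singleton.2 hab)
  rw [insert_empty_eq] at this
  linarith

theorem triple_sub_pair_le (hsub : SubmodularOn E f) {a b c : α} (hac : a ≠ c)
    (hbc : b ≠ c) (hE : ({a, b, c} : Finset α) ⊆ E) :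
    f {a, b, c} - f {a, b} ≤ f {a, c} - f {a} := by
  have hc : c ∉ ({a, b} : Finset α) := by simp [hac.symm, hbc.symm]
  have := hsub {a} {a, b} (by simp) (subset_trans (by simp) hE) c (hE (by simp)) hc
  rwa [insert_comm c a, pair_comm c b, pair_comm c a] at this

end SubmodularOn

theorem two_of_three_greedy_bound_general [DecidableEq α] (E : Finset α) (f : Finset α → ℝ)
    (hf0 : NonnegOn E f) (hsub : SubmodularOn E f)
    (y₁ y₂ y₃ : α) (h12 : y₁ ≠ y₂) (h13 : y₁ ≠ y₃) (h23 : y₂ ≠ y₃)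
    (hY : ({y₁, y₂, y₃} : Finset α) ⊆ E)
    (hfirst : ∀ y ∈ ({y₁, y₂, y₃} : Finset α), f {y} ≤ f {y₁})
    (hsecond : ∀ y ∈ ({y₁, y₂, y₃} : Finset α) \ {y₁},
      marginal f {y₁} {y} ≤ marginal f {y₁} {y₂}) :
    (2 / 3 : ℝ) * f {y₁, y₂, y₃} ≤ f {y₁, y₂} := by
  have h_third := hsub.triple_sub_pair_le h13 h23 hY
  have h_pair := hsub.pair_add_empty_le h12 (hY (by simp)) (hY (by simp))
  have h_greedy₁ := hfirst y₂ (by simp)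
  have h_greedy₂ := hsecond y₃ (by simp [h13.symm])
  rw [marginal_singleton_singleton, marginal_singleton_singleton] at h_greedy₂
  have h_empty := hf0 ∅ (empty_subset E)
  linarith

/-- if `Y = {y₁, y₂, y₃}` consists of three distinct elements ordered
by greedy marginal values, then `f({y₁, y₂}) ≥ (2/3)·f(Y)`. -/
theorem two_of_three_greedy_bound [DecidableEq α] (E : Finset α) (f : Finset α → ℝ)
    (hf0 : NonnegOn E f) (hmono : MonotoneOnSets E f) (hsub : SubmodularOn E f)
    (y₁ y₂ y₃ : α) (h12 : y₁ ≠ y₂) (h13 : y₁ ≠ y₃) (h23 : y₂ ≠ y₃)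
    (hY : ({y₁, y₂, y₃} : Finset α) ⊆ E)
    (hfirst : ∀ y ∈ ({y₁, y₂, y₃} : Finset α), f {y} ≤ f {y₁})
    (hsecond : ∀ y ∈ ({y₁, y₂, y₃} : Finset α) \ {y₁},
      marginal f {y₁} {y} ≤ marginal f {y₁} {y₂}) :
    (2 / 3 : ℝ) * f {y₁, y₂, y₃} ≤ f {y₁, y₂} :=
  two_of_three_greedy_bound_general E f hf0 hsub y₁ y₂ y₃ h12 h13 h23 hY hfirst hsecond
end

section
/- For all positive reals a, b, p, q, F satisfying 3p + q ≤ F, it holds that a·ln(p/a) + b·ln(q/b) ≤ −a + (a + b)·ln( F/(a + b) ). -/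
/-!
By the log-sum inequality (Jensen for the concave `log`),
`a log(3p/a) + b log(q/b) ≤ (a + b) log((3p + q)/(a + b)) ≤ (a + b) log(F/(a + b))`,
and `a log(3p/a) = a log(p/a) + a log 3 ≥ a log(p/a) + a` since `log 3 > 1`.
-/

open Real Finset

theorem Real.sum_mul_log_div_le_mul_log_sum_div_sum {ι : Type*} (s : Finset ι) {a x : ι → ℝ}
    (ha : ∀ i ∈ s, 0 < a i) (hx : ∀ i ∈ s, 0 < x i) :
    ∑ i ∈ s, a i * log (x i / a i) ≤ (∑ i ∈ s, a i) * log ((∑ i ∈ s, x i) / ∑ i ∈ s, a i) := by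
  rcases s.eq_empty_or_nonempty with rfl | hs
  · simp
  set A := ∑ i ∈ s, a i
  have hA : 0 < A := sum_pos ha hs
  have jensen := strictConcaveOn_log_Ioi.concaveOn.le_map_sum (t := s) (w := fun i ↦ a i / A)
    (p := fun i ↦ x i / a i) (fun i hi ↦ (div_pos (ha i hi) hA).le)
    (by rw [← sum_div, div_self hA.ne']) (fun i hi ↦ div_pos (hx i hi) (ha i hi))
  have hmean : ∑ i ∈ s, a i / A * (x i / a i) = (∑ i ∈ s, x i) / A := by
    rw [sum_div]
    exact sum_congr rfl fun i hi ↦ by field_simp [(ha i hi).ne']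
  simp only [smul_eq_mul, hmean] at jensen
  calc ∑ i ∈ s, a i * log (x i / a i)
      = A * ∑ i ∈ s, a i / A * log (x i / a i) := by
        rw [mul_sum]; exact sum_congr rfl fun i _ ↦ by field_simp
    _ ≤ A * log ((∑ i ∈ s, x i) / A) := mul_le_mul_of_nonneg_left jensen hA.le

theorem logsum_estimate_general (a b p q F : ℝ)
    (ha : 0 < a) (hb : 0 < b) (hp : 0 < p) (hq : 0 < q)
    (h3 : 3 * p + q ≤ F) :
    a * Real.log (p / a) + b * Real.log (q / b) ≤ -a + (a + b) * Real.log (F / (a + b)) := by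
  have hlogsum :
      a * log (3 * p / a) + b * log (q / b) ≤ (a + b) * log ((3 * p + q) / (a + b)) := by
    simpa [Fin.sum_univ_two] using
      sum_mul_log_div_le_mul_log_sum_div_sum univ (a := ![a, b]) (x := ![3 * p, q])
        (by simp [Fin.forall_fin_two, ha, hb]) (by simp [Fin.forall_fin_two, hp, hq])
  have hsplit : log (3 * p / a) = log 3 + log (p / a) := by
    rw [mul_div_assoc, log_mul (by norm_num) (by positivity)]
  have hlog3 : 1 < log 3 := lt_trans (by norm_num) log_three_gt_d9
  calc a * log (p / a) + b * log (q / b)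
      = a * log (3 * p / a) + b * log (q / b) - a * log 3 := by rw [hsplit]; ring
    _ ≤ -a + (a + b) * log ((3 * p + q) / (a + b)) := by nlinarith
    _ ≤ -a + (a + b) * log (F / (a + b)) := by gcongr

/-- the key estimate (H_third), via the log-sum inequality and
`ln 3 > 1`: for all positive reals `a, b, p, q, F` with `3p + q ≤ F`,
`a·ln(p/a) + b·ln(q/b) ≤ -a + (a + b)·ln(F/(a + b))`. -/
theorem logsum_estimate (a b p q F : ℝ)
    (ha : 0 < a) (hb : 0 < b) (hp : 0 < p) (hq : 0 < q) (hF : 0 < F)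
    (h3 : 3 * p + q ≤ F) :
    a * Real.log (p / a) + b * Real.log (q / b) ≤ -a + (a + b) * Real.log (F / (a + b)) :=
  logsum_estimate_general a b p q F ha hb hp hq h3
end
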